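/- arXiv:1003.6020 — 2 statements merged into one kernel-verified Lean document; each statement's English description precedes it below -/
import Mathlib

section
/- As x → ∞, log Γ(x+1) − ((x + 1/2)·log x − x + (1/2)·log(2π)) − 1/(12x) = O(1/x³). -/
/-!
Write `f x = log Γ(x+1) - ((x + 1/2) log x - x + (1/2) log 2π)`. Stirling's formula for `n!`
gives `f n → 0`, and log-convexity of `Γ` pins `log Γ` between consecutive integers closely
enough to get `f x → 0` along the reals. The functional equation of `Γ` gives
`f x - f (x+1) = (x + 1/2) log (1 + 1/x) - 1`, which by the Taylor expansion of `log (1 + u)`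
equals `1/(12x) - 1/(12(x+1))` up to `3/x⁴ ≤ 3/x³ - 3/(x+1)³`. Telescoping along
`x, x+1, x+2, …` therefore bounds `|f x - 1/(12x)|` by `3/x³`.
-/

open Real Filter Topology Asymptotics

lemma abs_le_of_abs_sub_succ_le {u v : ℕ → ℝ} (hu : Tendsto u atTop (𝓝 0))
    (hv : Tendsto v atTop (𝓝 0)) (h : ∀ n, |u n - u (n + 1)| ≤ v n - v (n + 1)) :
    |u 0| ≤ v 0 := by
  have hN : ∀ N, |u 0 - u N| ≤ v 0 - v N := by
    intro N
    induction N with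
    | zero => simp
    | succ N ih => calc
        |u 0 - u (N + 1)| ≤ |u 0 - u N| + |u N - u (N + 1)| := abs_sub_le _ _ _
        _ ≤ v 0 - v (N + 1) := by linarith [h N]
  have hl : Tendsto (fun N => |u 0 - u N|) atTop (𝓝 |u 0|) := by
    simpa using (tendsto_const_nhds.sub hu).abs
  have hr : Tendsto (fun N => v 0 - v N) atTop (𝓝 (v 0)) := by
    simpa using tendsto_const_nhds.sub hv
  exact le_of_tendsto_of_tendsto' hl hr hN

lemma abs_log_one_add_sub_taylor_le {u : ℝ} (hu0 : 0 ≤ u) (hu : u ≤ 1/2) :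
    |log (1 + u) - (u - u^2/2 + u^3/3 - u^4/4)| ≤ 2 * u^5 := by
  have hu1 : |-u| < 1 := by rw [abs_neg, abs_of_nonneg hu0]; linarith
  have h := abs_log_sub_add_sum_range_le hu1 4
  rw [abs_neg, abs_of_nonneg hu0, sub_neg_eq_add] at h
  calc |log (1 + u) - (u - u^2/2 + u^3/3 - u^4/4)|
      = |∑ i ∈ Finset.range 4, (-u) ^ (i + 1) / (i + 1) + log (1 + u)| := by
        simp only [Finset.sum_range_succ, Finset.sum_range_zero]
        ring_nf
    _ ≤ u ^ 5 / (1 - u) := h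
    _ ≤ 2 * u^5 := by
        rw [div_le_iff₀ (by linarith)]
        nlinarith [mul_nonneg (pow_nonneg hu0 5) (by linarith : (0 : ℝ) ≤ 1 - 2 * u)]

noncomputable def stirlingRemainder (x : ℝ) : ℝ :=
  log (Gamma (x + 1)) - ((x + 1/2) * log x - x + (1/2) * log (2 * π))

lemma stirlingRemainder_sub_add_one {x : ℝ} (hx : 0 < x) :
    stirlingRemainder x - stirlingRemainder (x + 1) = (x + 1/2) * log (1 + x⁻¹) - 1 := by
  have hΓ : log (Gamma (x + 1 + 1)) = log (x + 1) + log (Gamma (x + 1)) := by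
    rw [Gamma_add_one (by positivity),
      log_mul (by positivity) (Gamma_pos_of_pos (by positivity)).ne']
  have hlog : log (1 + x⁻¹) = log (x + 1) - log x := by
    rw [← log_div (by positivity) hx.ne', add_div, div_self hx.ne', one_div]
  unfold stirlingRemainder
  rw [hΓ, hlog]
  ring

lemma tendsto_stirlingRemainder_natCast :
    Tendsto (fun n : ℕ => stirlingRemainder n) atTop (𝓝 0) := by
  have hpi : √π ≠ 0 := (Real.sqrt_pos.2 pi_pos).ne'
  have h := (Stirling.tendsto_stirlingSeq_sqrt_pi.log hpi).sub_const (log √π)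
  rw [sub_self] at h
  refine h.congr' ?_
  filter_upwards [eventually_ne_atTop 0] with n hn
  have hn0 : (0 : ℝ) < n := by positivity
  rw [Stirling.log_stirlingSeq_formula, stirlingRemainder,
    Gamma_nat_eq_factorial, log_mul two_ne_zero hn0.ne', log_div hn0.ne' (exp_ne_zero 1), log_exp,
    log_mul two_ne_zero pi_pos.ne', log_sqrt pi_pos.le]
  ring

lemma log_Gamma_add_one_add_sub_bounds {n : ℕ} (hn : 1 ≤ n) {s : ℝ} (hs0 : 0 ≤ s)
    (hs1 : s ≤ 1) :
    s * log n ≤ log (Gamma (n + 1 + s)) - log (Gamma (n + 1)) ∧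
      log (Gamma (n + 1 + s)) - log (Gamma (n + 1)) ≤ s * log (n + 1) := by
  rcases hs0.eq_or_lt with rfl | hs
  · simp
  have hfeq : ∀ {y : ℝ}, 0 < y → (log ∘ Gamma) (y + 1) = (log ∘ Gamma) y + log y := by
    intro y hy
    simp only [Function.comp_apply]
    rw [Gamma_add_one hy.ne', log_mul hy.ne' (Gamma_pos_of_pos hy).ne', add_comm]
  have hge := BohrMollerup.f_add_nat_ge convexOn_log_Gamma hfeq (n := n + 1) (by omega) hs
  have hle := BohrMollerup.f_add_nat_le convexOn_log_Gamma hfeq (n := n + 1) (by omega) hs hs1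
  push_cast at hge hle
  simp only [Function.comp_apply, add_sub_cancel_right] at hge hle
  constructor <;> linarith

lemma abs_stirlingRemainder_add_sub_le {n : ℕ} (hn : 1 ≤ n) {s : ℝ} (hs0 : 0 ≤ s)
    (hs1 : s ≤ 1) :
    |stirlingRemainder (n + s) - stirlingRemainder n| ≤ (log (n + 1) - log n) + 2 / n := by
  have hn0 : (0 : ℝ) < n := by exact_mod_cast hn
  have hns : (0 : ℝ) < n + s := by linarith
  obtain ⟨hΓlo, hΓhi⟩ := log_Gamma_add_one_add_sub_bounds hn hs0 hs1
  set L := log (n + s) - log n with hL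
  have hL_le : L ≤ s / n := by
    have h := log_le_sub_one_of_pos (div_pos hns hn0)
    rwa [log_div hns.ne' hn0.ne', add_div, div_self hn0.ne', add_sub_cancel_left] at h
  have hL_ge : s / (n + s) ≤ L := by
    have h := one_sub_inv_le_log_of_pos (div_pos hns hn0)
    rwa [log_div hns.ne' hn0.ne', inv_div, ← div_self hns.ne', ← sub_div,
      add_sub_cancel_left] at h
  have hsplit : stirlingRemainder (n + s) - stirlingRemainder n
      = (log (Gamma (n + 1 + s)) - log (Gamma (n + 1)) - s * log n) - ((n + s + 1/2) * L - s) := by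
    rw [stirlingRemainder, stirlingRemainder, hL, add_right_comm]
    ring
  have hR_nonneg : 0 ≤ (n + s + 1/2) * L - s := by
    have h := mul_le_mul_of_nonneg_left hL_ge hns.le
    rw [mul_div_cancel₀ _ hns.ne'] at h
    linarith [div_nonneg hs0 hns.le]
  have hR_le : (n + s + 1/2) * L - s ≤ 2 / n := by
    have h := mul_le_mul_of_nonneg_left hL_le hn0.le
    rw [mul_div_cancel₀ _ hn0.ne'] at h
    have hL1 : L ≤ 1 / n := hL_le.trans (div_le_div_of_nonneg_right hs1 hn0.le)
    have hL0 : 0 ≤ L := (div_nonneg hs0 hns.le).trans hL_ge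
    linarith [mul_le_of_le_one_left hL0 hs1, show 2 / (n : ℝ) = 2 * (1 / n) by ring]
  have hD_le : s * log (n + 1) - s * log n ≤ log (n + 1) - log n := by
    rw [← mul_sub]
    exact mul_le_of_le_one_left (sub_nonneg.2 (log_le_log hn0 (by linarith))) hs1
  have h2n : 0 ≤ 2 / (n : ℝ) := by positivity
  rw [hsplit, abs_sub_le_iff]
  constructor <;> linarith

lemma tendsto_stirlingRemainder : Tendsto stirlingRemainder atTop (𝓝 0) := by
  have hbound : Tendsto (fun n : ℕ => |stirlingRemainder n| + (log (n + 1) - log n) + 2 / n)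
      atTop (𝓝 0) := by
    simpa using (tendsto_stirlingRemainder_natCast.abs.add tendsto_log_nat_add_one_sub_log).add
      (tendsto_const_div_atTop_nhds_zero_nat 2)
  refine squeeze_zero_norm' ?_ (hbound.comp tendsto_nat_floor_atTop)
  filter_upwards [eventually_ge_atTop 1] with x hx
  have hn : 1 ≤ ⌊x⌋₊ := Nat.le_floor (by exact_mod_cast hx)
  have hs0 : 0 ≤ x - ⌊x⌋₊ := sub_nonneg.2 (Nat.floor_le (by linarith))
  have hs1 : x - ⌊x⌋₊ ≤ 1 := by linarith [Nat.lt_floor_add_one x]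
  have h := abs_stirlingRemainder_add_sub_le hn hs0 hs1
  rw [add_sub_cancel] at h
  rw [norm_eq_abs, Function.comp_apply]
  linarith [abs_sub_abs_le_abs_sub (stirlingRemainder x) (stirlingRemainder ⌊x⌋₊)]

lemma abs_add_half_mul_log_one_add_inv_sub_le {t : ℝ} (ht : 2 ≤ t) :
    |(t + 1/2) * log (1 + t⁻¹) - 1 - (1 / (12 * t) - 1 / (12 * (t + 1)))| ≤ 3 / t^4 := by
  have ht0 : 0 < t := by linarith
  have hu2 : t⁻¹ ≤ 1/2 := inv_le_of_inv_le₀ (by norm_num) (by linarith)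
  set E := log (1 + t⁻¹) - (t⁻¹ - t⁻¹^2/2 + t⁻¹^3/3 - t⁻¹^4/4) with hE_def
  have hE := abs_log_one_add_sub_taylor_le (inv_nonneg.2 ht0.le) hu2
  -- `E` is the Taylor error; the Taylor polynomial cancels the main terms exactly
  have hsplit : (t + 1/2) * log (1 + t⁻¹) - 1 - (1 / (12 * t) - 1 / (12 * (t + 1)))
      = (t + 1/2) * E - (1 / (8 * t^4) + 1 / (12 * t^3 * (t + 1))) := by
    rw [hE_def]
    field_simp
    ring
  have hmain : |(t + 1/2) * E| ≤ (t + 1/2) * (2 * t⁻¹^5) := by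
    rw [abs_mul, abs_of_pos (by linarith)]
    exact mul_le_mul_of_nonneg_left hE (by linarith)
  rw [hsplit]
  calc |(t + 1/2) * E - (1 / (8 * t^4) + 1 / (12 * t^3 * (t + 1)))|
      ≤ |(t + 1/2) * E| + (1 / (8 * t^4) + 1 / (12 * t^3 * (t + 1))) := by
        have h := abs_sub ((t + 1/2) * E) (1 / (8 * t^4) + 1 / (12 * t^3 * (t + 1)))
        rwa [abs_of_pos (by positivity : (0 : ℝ) < 1 / (8 * t^4) + 1 / (12 * t^3 * (t + 1)))] at h
    _ ≤ (t + 1/2) * (2 * t⁻¹^5) + (1 / (8 * t^4) + 1 / (12 * t^3 * (t + 1))) := by gcongr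
    _ ≤ 3 / t^4 := by
        rw [← sub_nonneg]
        have hdiff : 3 / t^4
              - ((t + 1/2) * (2 * t⁻¹^5) + (1 / (8 * t^4) + 1 / (12 * t^3 * (t + 1))))
            = (19 * t^2 - 3 * t - 24) / (24 * t^5 * (t + 1)) := by
          field_simp
          ring
        rw [hdiff]
        apply div_nonneg _ (by positivity)
        nlinarith

lemma abs_stirlingRemainder_sub_inv_step_le {y : ℝ} (hy : 2 ≤ y) :
    |(stirlingRemainder y - 1 / (12 * y)) - (stirlingRemainder (y + 1) - 1 / (12 * (y + 1)))|
      ≤ 3 / y^3 - 3 / (y + 1)^3 := by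
  have hy0 : 0 < y := by linarith
  rw [sub_sub_sub_comm, stirlingRemainder_sub_add_one hy0]
  refine (abs_add_half_mul_log_one_add_inv_sub_le hy).trans ?_
  rw [← sub_nonneg]
  have hdiff : 3 / y^3 - 3 / (y + 1)^3 - 3 / y^4
      = 3 * (2 * y^3 - 2 * y - 1) / (y^4 * (y + 1)^3) := by
    field_simp
    ring
  rw [hdiff]
  apply div_nonneg _ (by positivity)
  have hcube : 0 ≤ y * (y - 2) * (y + 2) := by
    apply mul_nonneg (mul_nonneg hy0.le _) <;> linarith
  nlinarith

lemma abs_stirlingRemainder_sub_le {x : ℝ} (hx : 2 ≤ x) :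
    |stirlingRemainder x - 1 / (12 * x)| ≤ 3 / x^3 := by
  have hxn : Tendsto (fun n : ℕ => x + n) atTop atTop :=
    tendsto_atTop_add_const_left _ x tendsto_natCast_atTop_atTop
  have hu : Tendsto (fun n : ℕ => stirlingRemainder (x + n) - 1 / (12 * (x + n))) atTop
      (𝓝 0) := by
    simpa using (tendsto_stirlingRemainder.comp hxn).sub
      (tendsto_inv_atTop_zero.comp (hxn.const_mul_atTop (by norm_num : (0 : ℝ) < 12)))
  have hv : Tendsto (fun n : ℕ => 3 / (x + n)^3) atTop (𝓝 0) :=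
    tendsto_const_nhds.div_atTop ((tendsto_pow_atTop three_ne_zero).comp hxn)
  simpa using abs_le_of_abs_sub_succ_le hu hv fun n => by
    push_cast
    rw [← add_assoc]
    exact abs_stirlingRemainder_sub_inv_step_le (by linarith [n.cast_nonneg (α := ℝ)])

theorem stirling_series_truncated :
    (fun x : ℝ => Real.log (Real.Gamma (x + 1)) -
        ((x + 1/2) * Real.log x - x + (1/2) * Real.log (2 * π)) - 1 / (12 * x))
      =O[atTop] (fun x : ℝ => 1 / x ^ 3) := by
  refine IsBigO.of_bound 3 ?_
  filter_upwards [eventually_ge_atTop 2] with x hx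
  rw [norm_eq_abs, norm_eq_abs, abs_of_pos (by positivity : (0 : ℝ) < 1 / x ^ 3), mul_one_div]
  exact abs_stirlingRemainder_sub_le hx
end

section
/- There exist constants C > 0 and X such that for all x ≥ X, |Γ(x+1)/(x^x e^{-x} √(2π(x+1/6))) − (1 + 1/(144(x+1/4)²) − 1/(12960(x+1/4)³))| ≤ C/x⁴. -/
/-!
Let `μ(x) = log Γ(x) - ((x - 1/2) log x - x + log √(2π))` be Binet's function, so that the quotient
in the theorem is `exp μ(x) / √(1 + 1/(6x))`. By `Γ(x+1) = x Γ(x)`,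
`μ(x) - μ(x+1) = (x + 1/2) log (1 + 1/x) - 1`, and expanding the logarithm shows that this is
`a(x) - a(x+1) + O(x⁻⁶)` for `a(x) = 1/(12x) - 1/(360x³)`. Since `μ(x+n) → 0` as `n → ∞`
(Stirling's formula for `n!` and Euler's limit formula for `log Γ`), summing the differences gives
`μ(x) = a(x) + O(x⁻⁵)`. Expanding `exp (a(x))` and `√(1 + 1/(6x))` to third order, what remains
is an identity of rational functions of `x` whose difference is `O(x⁻⁴)`.
-/

open Real Filter Topology

lemma tendsto_add_mul_log_one_add_div (θ b : ℝ) :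
    Tendsto (fun y : ℝ => (y + b) * log (1 + θ / y)) atTop (𝓝 θ) := by
  have hlog : Tendsto (fun y : ℝ => log (1 + θ / y)) atTop (𝓝 0) := by
    simpa using ((tendsto_const_nhds.div_atTop tendsto_id).const_add 1).log
      (by norm_num : (1 : ℝ) + 0 ≠ 0)
  simpa [add_mul] using (tendsto_mul_log_one_add_div_atTop θ).add (hlog.const_mul b)

lemma abs_le_of_tendsto_of_abs_sub_le {u v : ℕ → ℝ} (hu : Tendsto u atTop (𝓝 0))
    (hv : ∀ n, 0 ≤ v n) (h : ∀ n, |u n - u (n + 1)| ≤ v n - v (n + 1)) : |u 0| ≤ v 0 := by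
  have key : ∀ N, |u 0 - u N| ≤ v 0 - v N := by
    intro N
    induction N with
    | zero => simp
    | succ N ih => linarith [abs_sub_le (u 0) (u N) (u (N + 1)), h N]
  have hlim : Tendsto (fun N => |u 0 - u N|) atTop (𝓝 |u 0|) := by
    simpa using (hu.const_sub (u 0)).abs
  exact le_of_tendsto' hlim fun N => (key N).trans (by linarith [hv N])

lemma abs_log_one_add_inv_sub_le {t : ℝ} (ht : 2 ≤ t) :
    |log (1 + 1/t) - (1/t - 1/(2*t^2) + 1/(3*t^3) - 1/(4*t^4) + 1/(5*t^5) - 1/(6*t^6))|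
      ≤ 2 / t^7 := by
  have ht0 : 0 < t := by linarith
  have htne : t ≠ 0 := ht0.ne'
  have habs : |-(1/t)| = 1/t := by rw [abs_neg, abs_of_pos (by positivity)]
  have h := abs_log_sub_add_sum_range_le (x := -(1/t)) (by rw [habs, div_lt_one ht0]; linarith) 6
  have hsum : ∑ i ∈ Finset.range 6, (-(1/t)) ^ (i + 1) / (i + 1)
      = -(1/t - 1/(2*t^2) + 1/(3*t^3) - 1/(4*t^4) + 1/(5*t^5) - 1/(6*t^6)) := by
    simp only [Finset.sum_range_succ, Finset.sum_range_zero]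
    push_cast
    ring
  rw [habs, hsum, sub_neg_eq_add, neg_add_eq_sub] at h
  refine h.trans ?_
  have ht1 : 0 < t - 1 := by linarith
  rw [show (1/t)^(6+1) / (1 - 1/t) = 1 / (t^6 * (t - 1)) by
      rw [one_sub_div htne, div_pow]; field_simp; ring,
    div_le_div_iff₀ (by positivity) (by positivity)]
  nlinarith [mul_nonneg (pow_nonneg ht0.le 6) (sub_nonneg.2 ht)]

lemma five_div_pow_six_le_inv_pow_sub {t : ℝ} (ht : 1 < t) :
    5 / t^6 ≤ 1 / (t - 1)^5 - 1 / t^5 := by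
  have ht0 : 0 < t := by linarith
  have ht1 : 0 < t - 1 := by linarith
  have hgap : 0 < t^6 - (t + 5) * (t - 1)^5 := by
    rw [show t^6 - (t + 5) * (t - 1)^5
        = 15*(t-1)^4 + 20*(t-1)^3 + 15*(t-1)^2 + 6*(t-1) + 1 by ring]
    positivity
  rw [div_sub_div _ _ (by positivity) (by positivity),
    div_le_div_iff₀ (by positivity) (by positivity)]
  nlinarith [mul_pos (pow_pos ht0 5) hgap]

lemma abs_exp_sub_exp_le {a m : ℝ} (ha : a ≤ 1) (hm : |m - a| ≤ 1) :
    |exp m - exp a| ≤ 6 * |m - a| := by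
  have hexp : exp a ≤ 3 := (exp_le_exp.2 ha).trans (by linarith [exp_one_lt_d9])
  calc |exp m - exp a| = exp a * |exp (m - a) - 1| := by
        rw [← abs_of_pos (exp_pos a), ← abs_mul, abs_of_pos (exp_pos a), mul_sub, ← exp_add]
        ring_nf
    _ ≤ 3 * (2 * |m - a|) :=
        mul_le_mul hexp (abs_exp_sub_one_le hm) (abs_nonneg _) (by norm_num)
    _ = 6 * |m - a| := by ring

noncomputable def expTaylor3 (a : ℝ) : ℝ := 1 + a + a^2/2 + a^3/6

lemma abs_exp_sub_expTaylor3_le {a : ℝ} (ha : |a| ≤ 1) :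
    |exp a - expTaylor3 a| ≤ |a|^4 := by
  have h := exp_bound ha (n := 4) (by norm_num)
  norm_num [Finset.sum_range_succ, Nat.factorial] at h
  rw [expTaylor3]
  exact h.trans (by nlinarith [pow_nonneg (abs_nonneg a) 4])

noncomputable def sqrtOneAddTaylor3 (u : ℝ) : ℝ := 1 + u/2 - u^2/8 + u^3/16

lemma abs_sqrt_one_add_sub_sqrtOneAddTaylor3_le {u : ℝ} (h0 : 0 ≤ u) (h1 : u ≤ 1) :
    |√(1 + u) - sqrtOneAddTaylor3 u| ≤ u^4 := by
  rw [sqrtOneAddTaylor3]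
  have hT : 0 ≤ 1 + u/2 - u^2/8 + u^3/16 - u^4 := by
    nlinarith [pow_le_one₀ h0 h1 (n := 4), pow_nonneg h0 3]
  have hup : √(1 + u) ≤ 1 + u/2 - u^2/8 + u^3/16 := by
    rw [sqrt_le_left (by linarith [pow_nonneg h0 4])]
    nlinarith [pow_nonneg h0 4, pow_nonneg h0 5, pow_nonneg h0 6]
  have hlo : 1 + u/2 - u^2/8 + u^3/16 - u^4 ≤ √(1 + u) := by
    rw [le_sqrt hT (by linarith)]
    nlinarith [pow_nonneg h0 4, pow_nonneg h0 5, pow_nonneg h0 6, pow_nonneg h0 7, pow_nonneg h0 8]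
  rw [abs_le]
  constructor <;> linarith

lemma log_Gamma_add_one {y : ℝ} (hy : 0 < y) :
    log (Gamma (y + 1)) = log (Gamma y) + log y := by
  rw [Gamma_add_one hy.ne', log_mul hy.ne' (Gamma_pos_of_pos hy).ne', add_comm]

noncomputable def logStirling (t : ℝ) : ℝ := (t - 1/2) * log t - t + log (√(2 * π))

noncomputable def binet (t : ℝ) : ℝ := log (Gamma t) - logStirling t

lemma mul_exp_logStirling {x : ℝ} (hx : 0 < x) :
    x * exp (logStirling x) = x ^ x * exp (-x) * √(2 * π) * √x := by
  have hpow : x * x ^ (x - 1/2) = x ^ x * √x := by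
    rw [sqrt_eq_rpow, ← rpow_add hx, ← rpow_one_add' hx.le (by linarith)]
    ring_nf
  rw [logStirling, exp_add, exp_sub, exp_log (by positivity), mul_comm (x - 1/2),
    ← rpow_def_of_pos hx, exp_neg]
  linear_combination (exp x)⁻¹ * √(2 * π) * hpow

lemma Gamma_add_one_div_eq {x : ℝ} (hx : 0 < x) :
    Gamma (x + 1) / (x ^ x * exp (-x) * √(2 * π * (x + 1/6)))
      = exp (binet x) / √(1 + 1 / (6 * x)) := by
  have hsqrt : √(2 * π * (x + 1/6)) = √(2 * π) * √x * √(1 + 1 / (6 * x)) := by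
    rw [← sqrt_mul (by positivity), ← sqrt_mul (by positivity)]
    congr 1
    field_simp
  rw [binet, exp_sub, exp_log (Gamma_pos_of_pos hx), Gamma_add_one hx.ne', hsqrt,
    ← mul_assoc, ← mul_assoc, ← mul_exp_logStirling hx]
  field_simp

lemma binet_sub_binet_add_one {t : ℝ} (ht : 0 < t) :
    binet t - binet (t + 1) = (t + 1/2) * log (1 + 1/t) - 1 := by
  have hlog : log (1 + 1/t) = log (t + 1) - log t := by
    rw [← log_div (by positivity) ht.ne']
    congr 1
    field_simp
  rw [binet, binet, logStirling, logStirling, log_Gamma_add_one ht, hlog]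
  ring

lemma binet_nat_add_one (n : ℕ) :
    binet (n + 1) = log (Stirling.stirlingSeq (n + 1)) - log √π := by
  have hn : (0 : ℝ) < n + 1 := by positivity
  rw [Stirling.log_stirlingSeq_formula, binet, logStirling, Gamma_nat_eq_factorial,
    Nat.factorial_succ]
  push_cast
  rw [log_mul (by positivity) (by positivity),
    log_mul (by norm_num) (by positivity), log_div hn.ne' (exp_pos 1).ne', log_exp,
    log_sqrt (by positivity), log_sqrt (by positivity), log_mul (by norm_num) pi_pos.ne']
  ring

lemma tendsto_binet_nat_add_one : Tendsto (fun n : ℕ => binet (n + 1)) atTop (𝓝 0) := by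
  have h := ((Stirling.tendsto_stirlingSeq_sqrt_pi.comp (tendsto_add_atTop_nat 1)).log
    (sqrt_pos.2 pi_pos).ne').sub_const (log √π)
  rw [sub_self] at h
  refine h.congr fun n => ?_
  simp only [Function.comp_apply, binet_nat_add_one]

lemma tendsto_logStirling_add_sub (x : ℝ) :
    Tendsto (fun y => logStirling (y + x) - logStirling y - x * log (y - 1)) atTop (𝓝 0) := by
  have hlog : Tendsto (fun y => x * ((log (y + x) - log y) - (log (y - 1) - log y)))
      atTop (𝓝 0) := by
    simpa [← sub_eq_add_neg] using
      ((tendsto_log_comp_add_sub_log x).sub (tendsto_log_comp_add_sub_log (-1))).const_mul x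
  have h := ((tendsto_add_mul_log_one_add_div x (-1/2)).add hlog).sub_const x
  rw [add_zero, sub_self] at h
  refine h.congr' ?_
  filter_upwards [eventually_gt_atTop (|x|)] with y hy
  have hy0 : 0 < y := (abs_nonneg x).trans_lt hy
  have hyx : 0 < y + x := by linarith [neg_abs_le x]
  have hdiv : log (1 + x / y) = log (y + x) - log y := by
    rw [← log_div hyx.ne' hy0.ne', add_div, div_self hy0.ne']
  rw [hdiv, logStirling, logStirling]
  ring

lemma log_Gamma_add_nat_add_one {x : ℝ} (hx : 0 < x) (n : ℕ) :
    log (Gamma (x + (n + 1 : ℕ))) - log (Gamma (n + 1)) - x * log n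
      = log (Gamma x) - BohrMollerup.logGammaSeq x n := by
  have h := BohrMollerup.f_add_nat_eq (f := log ∘ Gamma) (fun hy => log_Gamma_add_one hy) hx
    (n + 1)
  simp only [Function.comp_apply] at h
  rw [h, Gamma_nat_eq_factorial, BohrMollerup.logGammaSeq]
  ring

lemma tendsto_binet_add_nat {x : ℝ} (hx : 0 < x) :
    Tendsto (fun n : ℕ => binet (x + n)) atTop (𝓝 0) := by
  rw [← tendsto_add_atTop_iff_nat 1]
  have hGamma := (BohrMollerup.tendsto_log_gamma hx).const_sub (log (Gamma x))
  have hStirling := (tendsto_logStirling_add_sub x).comp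
    (tendsto_atTop_add_const_right atTop (1 : ℝ) tendsto_natCast_atTop_atTop)
  have h := (tendsto_binet_nat_add_one.add hGamma).sub hStirling
  rw [sub_self, add_zero, sub_zero] at h
  refine h.congr fun n => ?_
  have := log_Gamma_add_nat_add_one hx n
  simp only [Function.comp_apply, binet]
  push_cast at this ⊢
  rw [add_sub_cancel_right, add_comm ((n : ℝ) + 1) x]
  linarith

noncomputable def binetApprox (t : ℝ) : ℝ := 1/(12*t) - 1/(360*t^3)

lemma tendsto_binetApprox_atTop : Tendsto binetApprox atTop (𝓝 0) := by
  have h : Tendsto (fun t : ℝ => t⁻¹ / 12 - t⁻¹ ^ 3 / 360) atTop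
      (𝓝 (0 / 12 - 0 ^ 3 / 360)) :=
    (tendsto_inv_atTop_zero.div_const 12).sub ((tendsto_inv_atTop_zero.pow 3).div_const 360)
  norm_num at h
  refine h.congr fun t => ?_
  rw [binetApprox]
  ring

lemma abs_binet_sub_binet_add_one_sub_le {t : ℝ} (ht : 2 ≤ t) :
    |binet t - binet (t + 1) - (binetApprox t - binetApprox (t + 1))| ≤ 5 / t^6 := by
  have ht0 : 0 < t := by linarith
  rw [binet_sub_binet_add_one ht0]
  set P := 1/t - 1/(2*t^2) + 1/(3*t^3) - 1/(4*t^4) + 1/(5*t^5) - 1/(6*t^6) with hP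
  have hR : (t + 1/2) * P - 1 - (binetApprox t - binetApprox (t + 1))
      = -((1/12 + 2/5*t + 83/120*t^2 + 37/72*t^3 + 5/36*t^4) / (t^6 * (t+1)^4)) := by
    rw [hP, binetApprox, binetApprox]
    field_simp
    ring
  have hR_le : |(t + 1/2) * P - 1 - (binetApprox t - binetApprox (t + 1))| ≤ 1 / t^6 := by
    rw [hR, abs_neg, abs_of_nonneg (by positivity),
      div_le_div_iff₀ (by positivity) (by positivity)]
    have h4 : t^4 ≤ (t + 1)^4 := pow_le_pow_left₀ ht0.le (by linarith) 4
    nlinarith [pow_pos ht0 6, pow_pos ht0 3, pow_pos ht0 2,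
      mul_le_mul_of_nonneg_left h4 (pow_pos ht0 6).le]
  calc _ = |((t + 1/2) * P - 1 - (binetApprox t - binetApprox (t + 1)))
          + (t + 1/2) * (log (1 + 1/t) - P)| := by ring_nf
    _ ≤ 1 / t^6 + (2 * t) * (2 / t^7) := by
      refine (abs_add_le _ _).trans (add_le_add hR_le ?_)
      rw [abs_mul, abs_of_pos (by linarith)]
      exact mul_le_mul (by linarith) (abs_log_one_add_inv_sub_le ht) (abs_nonneg _) (by linarith)
    _ = 5 / t^6 := by field_simp; ring

lemma abs_binet_sub_binetApprox_le {x : ℝ} (hx : 2 ≤ x) :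
    |binet x - binetApprox x| ≤ 1 / (x - 1)^5 := by
  have hshift : Tendsto (fun n : ℕ => x + n) atTop atTop :=
    tendsto_atTop_add_const_left _ x tendsto_natCast_atTop_atTop
  have h := abs_le_of_tendsto_of_abs_sub_le
    (u := fun n : ℕ => binet (x + n) - binetApprox (x + n))
    (v := fun n : ℕ => 1 / (x + n - 1)^5)
    (by simpa using
      (tendsto_binet_add_nat (by linarith)).sub (tendsto_binetApprox_atTop.comp hshift))
    (fun n => div_nonneg zero_le_one (pow_nonneg (by linarith [n.cast_nonneg (α := ℝ)]) 5)) ?_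
  · simpa using h
  intro n
  have ht : 2 ≤ x + n := le_add_of_le_of_nonneg hx n.cast_nonneg
  simp only [Nat.cast_add_one, ← add_assoc]
  calc _ = |binet (x + n) - binet (x + n + 1) - (binetApprox (x + n) - binetApprox (x + n + 1))|
        := by congr 1; ring
    _ ≤ 5 / (x + n)^6 := abs_binet_sub_binet_add_one_sub_le ht
    _ ≤ 1 / (x + n - 1)^5 - 1 / (x + n)^5 := five_div_pow_six_le_inv_pow_sub (by linarith)
    _ = _ := by ring

noncomputable def cubicTruncation (x : ℝ) : ℝ :=
  1 + 1 / (144 * (x + 1/4) ^ 2) - 1 / (12960 * (x + 1/4) ^ 3)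

lemma abs_expTaylor3_binetApprox_sub_le {x : ℝ} (hx : 1 ≤ x) :
    |expTaylor3 (binetApprox x) - cubicTruncation x * sqrtOneAddTaylor3 (1 / (6 * x))|
      ≤ 1 / x^4 := by
  have hx0 : 0 < x := by linarith
  have hD : expTaylor3 (binetApprox x) - cubicTruncation x * sqrtOneAddTaylor3 (1 / (6 * x))
      = (-22780800*x^8 - 11251200*x^7 - 1678280*x^6 - 39600*x^5 + 14580*x^4 + 2096*x^3
          + 42*x^2 - 12*x - 1) / (279936000 * x^9 * (4*x + 1)^3) := by
    have : x + 1/4 ≠ 0 := by linarith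
    rw [expTaylor3, sqrtOneAddTaylor3, binetApprox, cubicTruncation]
    field_simp
    ring
  have hpow : ∀ k ≤ 8, x^k ≤ x^8 := fun k hk => pow_le_pow_right₀ hx hk
  have hnum : |-22780800*x^8 - 11251200*x^7 - 1678280*x^6 - 39600*x^5 + 14580*x^4 + 2096*x^3
      + 42*x^2 - 12*x - 1| ≤ 36000000 * x^8 := by
    rw [abs_le]
    constructor <;> nlinarith [hpow 0 (by norm_num), hpow 1 (by norm_num), hpow 2 (by norm_num),
      hpow 3 (by norm_num), hpow 4 (by norm_num), hpow 5 (by norm_num), hpow 6 (by norm_num),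
      hpow 7 (by norm_num), pow_pos hx0 2, pow_pos hx0 3, pow_pos hx0 4, pow_pos hx0 5,
      pow_pos hx0 6, pow_pos hx0 7, pow_pos hx0 8]
  have hden : 64 * x^12 ≤ x^9 * (4*x + 1)^3 := by
    have := pow_le_pow_left₀ (by positivity) (by linarith : 4*x ≤ 4*x + 1) 3
    nlinarith [pow_pos hx0 9]
  have hpos : 0 < 279936000 * x^9 * (4*x + 1)^3 := by positivity
  rw [hD, abs_div, abs_of_pos hpos, div_le_div_iff₀ hpos (by positivity)]
  nlinarith [mul_le_mul_of_nonneg_right hnum (pow_pos hx0 4).le, pow_pos hx0 12]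

lemma abs_exp_div_sqrt_sub_cubicTruncation_le {x m : ℝ} (hx : 1 ≤ x)
    (hm : |m - binetApprox x| ≤ 1) :
    |exp m / √(1 + 1 / (6 * x)) - cubicTruncation x| ≤ 6 * |m - binetApprox x| + 4 / x^4 := by
  have hx0 : 0 < x := by linarith
  set a := binetApprox x with ha
  set u := 1 / (6 * x) with hu
  set S := cubicTruncation x with hS
  have ha_nonneg : 0 ≤ a := by
    rw [ha, binetApprox, sub_nonneg, div_le_div_iff₀ (by positivity) (by positivity)]
    nlinarith [pow_le_pow_right₀ hx (by norm_num : 1 ≤ 3)]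
  have hx1 : 1 / x ≤ 1 := by rw [div_le_one hx0]; exact hx
  have ha_le : a ≤ 1 / x := by
    have : 1 / (12 * x) ≤ 1 / x := div_le_div_of_nonneg_left zero_le_one hx0 (by linarith)
    have : 0 ≤ 1 / (360 * x^3) := by positivity
    rw [ha, binetApprox]
    linarith
  have ha_abs : |a| ≤ 1 / x := by rwa [abs_of_nonneg ha_nonneg]
  have hu_nonneg : 0 ≤ u := by positivity
  have hu_le : u ≤ 1 / x := div_le_div_of_nonneg_left zero_le_one hx0 (by linarith)
  have hS : |S| ≤ 2 := by
    have hx' : 1 ≤ x + 1/4 := by linarith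
    have hp : 1 / (144 * (x + 1/4)^2) ≤ 1 := by
      rw [div_le_one (by positivity)]; nlinarith [one_le_pow₀ (n := 2) hx']
    have hq : 1 / (12960 * (x + 1/4)^3) ≤ 1 := by
      rw [div_le_one (by positivity)]; nlinarith [one_le_pow₀ (n := 3) hx']
    have : 0 ≤ 1 / (144 * (x + 1/4)^2) := by positivity
    have : 0 ≤ 1 / (12960 * (x + 1/4)^3) := by positivity
    rw [hS, cubicTruncation, abs_le]
    constructor <;> linarith
  have hsqrt : 1 ≤ √(1 + u) := by rw [one_le_sqrt]; linarith
  calc |exp m / √(1 + u) - S| ≤ |exp m - S * √(1 + u)| := by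
        have hpos : 0 < √(1 + u) := zero_lt_one.trans_le hsqrt
        rw [show exp m / √(1 + u) - S = (exp m - S * √(1 + u)) / √(1 + u) by field_simp,
          abs_div, abs_of_pos hpos]
        exact div_le_self (abs_nonneg _) hsqrt
    _ ≤ |exp m - exp a| + |exp a - expTaylor3 a| + |expTaylor3 a - S * sqrtOneAddTaylor3 u|
          + |S| * |√(1 + u) - sqrtOneAddTaylor3 u| := by
        have h1 := abs_sub_le (exp m) (exp a) (S * √(1 + u))
        have h2 := abs_sub_le (exp a) (expTaylor3 a) (S * √(1 + u))
        have h3 := abs_sub_le (expTaylor3 a) (S * sqrtOneAddTaylor3 u) (S * √(1 + u))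
        rw [← mul_sub, abs_mul, abs_sub_comm (sqrtOneAddTaylor3 u)] at h3
        linarith
    _ ≤ 6 * |m - a| + |a|^4 + 1 / x^4 + 2 * u^4 := by
        gcongr
        · exact abs_exp_sub_exp_le (ha_le.trans hx1) hm
        · exact abs_exp_sub_expTaylor3_le (ha_abs.trans hx1)
        · exact abs_expTaylor3_binetApprox_sub_le hx
        · exact abs_sqrt_one_add_sub_sqrtOneAddTaylor3_le hu_nonneg (hu_le.trans hx1)
    _ ≤ 6 * |m - a| + 4 / x^4 := by
        have ha4 : |a|^4 ≤ 1 / x^4 :=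
          (pow_le_pow_left₀ (abs_nonneg a) ha_abs 4).trans_eq (by ring)
        have hu4 : u^4 ≤ 1 / x^4 := (pow_le_pow_left₀ hu_nonneg hu_le 4).trans_eq (by ring)
        linarith [show 4 / x^4 = 4 * (1 / x^4) by ring]

theorem new_expansion_cubic_truncation :
    ∃ C > (0:ℝ), ∃ X : ℝ, ∀ x ≥ X,
      |Real.Gamma (x + 1) / (x ^ x * Real.exp (-x) * Real.sqrt (2 * π * (x + 1/6))) -
          (1 + 1 / (144 * (x + 1/4) ^ 2) - 1 / (12960 * (x + 1/4) ^ 3))|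
        ≤ C / x ^ 4 := by
  refine ⟨100, by norm_num, 2, fun x hx => ?_⟩
  have hx0 : 0 < x := by linarith
  have hbinet : |binet x - binetApprox x| ≤ 16 / x^4 := by
    refine (abs_binet_sub_binetApprox_le hx).trans ?_
    have hx4 : x^4 ≤ 16 * (x - 1)^5 := calc
      x^4 ≤ (2 * (x - 1))^4 := pow_le_pow_left₀ hx0.le (by linarith) 4
      _ = 16 * (x - 1)^4 := by ring
      _ ≤ 16 * (x - 1)^5 := by
        gcongr 16 * ?_; exact pow_le_pow_right₀ (by linarith) (by norm_num)
    rw [div_le_div_iff₀ (pow_pos (by linarith) 5) (by positivity)]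
    linarith
  have h16 : 16 / x^4 ≤ 1 := by
    rw [div_le_one (by positivity)]
    nlinarith [pow_le_pow_left₀ (by norm_num) hx 4]
  rw [Gamma_add_one_div_eq hx0]
  calc _ ≤ 6 * |binet x - binetApprox x| + 4 / x^4 :=
        abs_exp_div_sqrt_sub_cubicTruncation_le (by linarith) (hbinet.trans h16)
    _ ≤ 6 * (16 / x^4) + 4 / x^4 := by gcongr
    _ = 100 / x^4 := by ring
end
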